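/- Let A be an n×n Hermitian complex matrix, u ∈ ℂⁿ a unit vector, and t ∈ ℂⁿ with v := (I−uu*)t ≠ 0. For a nonzero vector z, write ρ(z) = ⟨z, Az⟩/‖z‖² for its Rayleigh quotient. Suppose τ is a scalar such that s := u + τ·v satisfies ρ(s) ≤ ρ(z) for every nonzero z in the span of {u, v}. Let J := (I−uu*)(A − ρ(s)·I)(I−uu*). Then ⟨J(u−s), u−s⟩ = ρ(u) − ρ(s). -/

import Mathlib

open scoped ComplexInnerProductSpace Matrix

/-- The action of a matrix on a vector of `EuclideanSpace ℂ (Fin n)`. -/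
noncomputable def mApp {n : ℕ} (A : Matrix (Fin n) (Fin n) ℂ)
    (v : EuclideanSpace ℂ (Fin n)) : EuclideanSpace ℂ (Fin n) :=
  Matrix.toEuclideanLin A v

/-- The orthogonal projection `(I - uu*) t = t - ⟪u, t⟫ u` onto the orthogonal
complement of the unit vector `u`. -/
noncomputable def proj {n : ℕ} (u t : EuclideanSpace ℂ (Fin n)) :
    EuclideanSpace ℂ (Fin n) :=
  t - ⟪u, t⟫ • u

/-- The (real) Rayleigh quotient `⟪z, Az⟫ / ‖z‖²` of a nonzero vector `z`
with respect to a Hermitian matrix `A`. -/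
noncomputable def rayleigh {n : ℕ} (A : Matrix (Fin n) (Fin n) ℂ)
    (z : EuclideanSpace ℂ (Fin n)) : ℝ :=
  (⟪z, mApp A z⟫).re / ‖z‖ ^ 2

/-! The minimality of `ρ(s)` on `W = span {u, v}` makes the Hermitian form of `S = A - ρ(s) I`
nonnegative on `W` and zero at `s ∈ W`, so `s` lies in its radical: `⟪w, S s⟫ = 0` for `w ∈ W`.
Since `u - s = -τ v` is orthogonal to `u`, both projections in `J` can be dropped, and expanding
`⟪S (u - s), u - s⟫` leaves only `⟪S u, u⟫ = ρ(u) - ρ(s)`. -/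

open RCLike
open scoped InnerProductSpace

section RadicalOfNonnegForm

variable {𝕜 E : Type*} [RCLike 𝕜] [NormedAddCommGroup E] [InnerProductSpace 𝕜 E]

lemma LinearMap.IsSymmetric.re_inner_map_eq_zero_of_nonneg {S : E →ₗ[𝕜] E} (hS : S.IsSymmetric)
    {s w : E} (hs : re ⟪s, S s⟫_𝕜 = 0)
    (hline : ∀ c : ℝ, 0 ≤ re ⟪s + (c : 𝕜) • w, S (s + (c : 𝕜) • w)⟫_𝕜) :
    re ⟪w, S s⟫_𝕜 = 0 := by
  have hexpand : ∀ c : ℝ, re ⟪s + (c : 𝕜) • w, S (s + (c : 𝕜) • w)⟫_𝕜 =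
      re ⟪w, S w⟫_𝕜 * (c * c) + 2 * re ⟪w, S s⟫_𝕜 * c + 0 := by
    intro c
    have hsym : re ⟪s, S w⟫_𝕜 = re ⟪w, S s⟫_𝕜 := by
      rw [← hS, ← inner_conj_symm, conj_re]
    simp only [map_add, map_smul, inner_add_left, inner_add_right, inner_smul_left,
      inner_smul_right, conj_ofReal, re_ofReal_mul, hs, hsym]
    ring
  have hdiscrim := discrim_le_zero fun c => (hexpand c) ▸ hline c
  rw [discrim] at hdiscrim
  nlinarith [sq_nonneg (re ⟪w, S s⟫_𝕜)]

lemma LinearMap.IsSymmetric.inner_map_eq_zero_of_nonneg_on {S : E →ₗ[𝕜] E}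
    (hS : S.IsSymmetric) {W : Submodule 𝕜 E} (hW : ∀ z ∈ W, 0 ≤ re ⟪z, S z⟫_𝕜)
    {s : E} (hsW : s ∈ W) (hs : re ⟪s, S s⟫_𝕜 = 0) {w : E} (hw : w ∈ W) :
    ⟪w, S s⟫_𝕜 = 0 := by
  -- in the direction `⟪w, S s⟫ • w` the real part becomes `‖⟪w, S s⟫‖ ^ 2`
  have hre : re ⟪⟪w, S s⟫_𝕜 • w, S s⟫_𝕜 = 0 :=
    hS.re_inner_map_eq_zero_of_nonneg hs fun c =>
      hW _ (W.add_mem hsW (W.smul_mem _ (W.smul_mem _ hw)))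
  rwa [inner_smul_left, RCLike.conj_mul, ← RCLike.ofReal_pow, RCLike.ofReal_re,
    sq_eq_zero_iff, norm_eq_zero] at hre

end RadicalOfNonnegForm

section EuclideanSpace

variable {n : ℕ}

lemma mApp_sub_smul_one (A : Matrix (Fin n) (Fin n) ℂ) (c : ℂ) (x : EuclideanSpace ℂ (Fin n)) :
    mApp (A - c • 1) x = mApp A x - c • x := by
  simp [mApp, map_sub, map_smul]

lemma re_inner_mApp_sub_smul_one (A : Matrix (Fin n) (Fin n) ℂ) (r : ℝ)
    (z : EuclideanSpace ℂ (Fin n)) :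
    (⟪z, mApp (A - (r : ℂ) • 1) z⟫).re = (⟪z, mApp A z⟫).re - r * ‖z‖ ^ 2 := by
  rw [mApp_sub_smul_one, inner_sub_right, inner_smul_right, Complex.sub_re,
    Complex.re_ofReal_mul, ← inner_self_eq_norm_sq (𝕜 := ℂ)]
  rfl

lemma isSymmetric_toEuclideanLin_sub_smul_one {A : Matrix (Fin n) (Fin n) ℂ}
    (hA : A.IsHermitian) (r : ℝ) :
    (Matrix.toEuclideanLin (A - (r : ℂ) • 1)).IsSymmetric :=
  Matrix.isSymmetric_toEuclideanLin_iff.mpr <|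
    hA.sub (Matrix.isHermitian_one.smul (Complex.conj_ofReal r))

lemma rayleigh_le_iff (A : Matrix (Fin n) (Fin n) ℂ) (r : ℝ)
    {z : EuclideanSpace ℂ (Fin n)} (hz : z ≠ 0) :
    r ≤ rayleigh A z ↔ 0 ≤ (⟪z, mApp (A - (r : ℂ) • 1) z⟫).re := by
  rw [rayleigh, le_div_iff₀ (by positivity), re_inner_mApp_sub_smul_one, sub_nonneg]

lemma re_inner_mApp_sub_rayleigh_self (A : Matrix (Fin n) (Fin n) ℂ)
    {z : EuclideanSpace ℂ (Fin n)} (hz : z ≠ 0) :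
    (⟪z, mApp (A - (rayleigh A z : ℂ) • 1) z⟫).re = 0 := by
  rw [re_inner_mApp_sub_smul_one, rayleigh, div_mul_cancel₀ _ (by positivity), sub_self]

lemma rayleigh_of_norm_eq_one (A : Matrix (Fin n) (Fin n) ℂ)
    {u : EuclideanSpace ℂ (Fin n)} (hu : ‖u‖ = 1) :
    rayleigh A u = (⟪u, mApp A u⟫).re := by
  rw [rayleigh, hu, one_pow, div_one]

variable {u : EuclideanSpace ℂ (Fin n)}

lemma inner_proj_right (hu : ‖u‖ = 1) (t : EuclideanSpace ℂ (Fin n)) : ⟪u, proj u t⟫ = 0 := by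
  rw [proj, inner_sub_right, inner_smul_right, inner_self_eq_norm_sq_to_K, hu]
  simp

lemma proj_eq_self_of_inner_eq_zero {x : EuclideanSpace ℂ (Fin n)} (hx : ⟪u, x⟫ = 0) :
    proj u x = x := by
  rw [proj, hx, zero_smul, sub_zero]

lemma inner_proj_left_of_inner_eq_zero (y : EuclideanSpace ℂ (Fin n))
    {x : EuclideanSpace ℂ (Fin n)} (hx : ⟪u, x⟫ = 0) :
    ⟪proj u y, x⟫ = ⟪y, x⟫ := by
  rw [proj, inner_sub_left, inner_smul_left, hx, mul_zero, sub_zero]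

end EuclideanSpace

theorem stmt6_general {n : ℕ} (A : Matrix (Fin n) (Fin n) ℂ) (hA : A.IsHermitian)
    (u : EuclideanSpace ℂ (Fin n)) (hu : ‖u‖ = 1)
    (t : EuclideanSpace ℂ (Fin n))
    (τ : ℂ) (s : EuclideanSpace ℂ (Fin n)) (hs : s = u + τ • proj u t)
    (hmin : ∀ z ∈ Submodule.span ℂ ({u, proj u t} : Set (EuclideanSpace ℂ (Fin n))),
      z ≠ 0 → rayleigh A s ≤ rayleigh A z) :
    ⟪proj u (mApp (A - (rayleigh A s : ℂ) • 1) (proj u (u - s))), u - s⟫ =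
      ((rayleigh A u - rayleigh A s : ℝ) : ℂ) := by
  set W := Submodule.span ℂ ({u, proj u t} : Set (EuclideanSpace ℂ (Fin n)))
  set S := Matrix.toEuclideanLin (A - (rayleigh A s : ℂ) • 1)
  have hS : S.IsSymmetric := isSymmetric_toEuclideanLin_sub_smul_one hA _
  have huW : u ∈ W := Submodule.subset_span (by simp)
  have hsW : s ∈ W := hs ▸ W.add_mem huW (W.smul_mem _ (Submodule.subset_span (by simp)))
  have hus : ⟪u, u - s⟫ = 0 := by
    rw [hs, sub_add_cancel_left, inner_neg_right, inner_smul_right, inner_proj_right hu,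
      mul_zero, neg_zero]
  have hs0 : s ≠ 0 := by
    rintro rfl
    simp [inner_self_eq_norm_sq_to_K, hu] at hus
  have hnonneg : ∀ z ∈ W, 0 ≤ (⟪z, S z⟫).re := fun z hz => by
    rcases eq_or_ne z 0 with rfl | hz0
    · simp
    · exact (rayleigh_le_iff A _ hz0).mp (hmin z hz hz0)
  have hSW : ∀ w ∈ W, ⟪w, S s⟫ = 0 := fun w hw =>
    hS.inner_map_eq_zero_of_nonneg_on hnonneg hsW (re_inner_mApp_sub_rayleigh_self A hs0) hw
  rw [proj_eq_self_of_inner_eq_zero hus, inner_proj_left_of_inner_eq_zero _ hus]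
  have hSW' : ∀ w ∈ W, ⟪S s, w⟫ = 0 := fun w hw => by
    rw [← inner_conj_symm, hSW w hw, map_zero]
  calc ⟪S (u - s), u - s⟫ = ⟪u, S u⟫ := by
        rw [map_sub, inner_sub_left, inner_sub_right, inner_sub_right, hS u s, hS u u,
          hSW u huW, hSW' u huW, hSW' s hsW]
        ring
    _ = ((rayleigh A u - rayleigh A s : ℝ) : ℂ) := by
        rw [← hS.coe_re_inner_self_apply]
        change ((⟪u, mApp (A - (rayleigh A s : ℂ) • 1) u⟫).re : ℂ) = _
        rw [re_inner_mApp_sub_smul_one, hu, rayleigh_of_norm_eq_one A hu, one_pow, mul_one]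

theorem stmt6 {n : ℕ} (A : Matrix (Fin n) (Fin n) ℂ) (hA : A.IsHermitian)
    (u : EuclideanSpace ℂ (Fin n)) (hu : ‖u‖ = 1)
    (t : EuclideanSpace ℂ (Fin n)) (hv : proj u t ≠ 0)
    (τ : ℂ) (s : EuclideanSpace ℂ (Fin n)) (hs : s = u + τ • proj u t)
    (hmin : ∀ z ∈ Submodule.span ℂ ({u, proj u t} : Set (EuclideanSpace ℂ (Fin n))),
      z ≠ 0 → rayleigh A s ≤ rayleigh A z) :
    ⟪proj u (mApp (A - (rayleigh A s : ℂ) • 1) (proj u (u - s))), u - s⟫ =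
      ((rayleigh A u - rayleigh A s : ℝ) : ℂ) :=
  stmt6_general A hA u hu t τ s hs hmin
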